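/- arXiv:1703.05681 — 2 statements merged into one kernel-verified Lean document; each statement's English description precedes it below -/
import Mathlib

section
/- Let ψⁱ, ψʲ, ψᵐ ∈ ℂ² with the standard Hermitian product, and suppose |P₋ψʲ|²⟨P₋ψⁱ, P₋ψᵐ⟩ = |P₊ψʲ|²⟨P₊ψⁱ, P₊ψᵐ⟩ where P± = (1/2)(I ± iγ₁γ₂). Then ⟨ψⁱ, γ₁ψʲ⟩⟨ψʲ, γ₂ψᵐ⟩ - ⟨ψⁱ, γ₂ψʲ⟩⟨ψʲ, γ₁ψᵐ⟩ = 2⟨ψⁱ, γ₁γ₂ψᵐ⟩|ψʲ|². -/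
open Matrix Complex

noncomputable section

def g1 : Matrix (Fin 2) (Fin 2) ℂ := !![0, 1; -1, 0]
def g2 : Matrix (Fin 2) (Fin 2) ℂ := !![0, Complex.I; Complex.I, 0]
def vol : Matrix (Fin 2) (Fin 2) ℂ := Complex.I • (g1 * g2)
def inn (u v : Fin 2 → ℂ) : ℂ := star (u 0) * v 0 + star (u 1) * v 1
def Pp : Matrix (Fin 2) (Fin 2) ℂ := (1/2 : ℂ) • (1 + vol)
def Pm : Matrix (Fin 2) (Fin 2) ℂ := (1/2 : ℂ) • (1 - vol)

/-!
In this representation `γ₁γ₂ = diag(i, -i)`, so the chirality operator `iγ₁γ₂` is `diag(-1, 1)`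
and `P₋`, `P₊` are the coordinate projections onto the first and second component. Expanding
both sides in components, the Fierz identity holds for all spinors up to the defect
`2i (|P₊ψʲ|² ⟨P₊ψⁱ, P₊ψᵐ⟩ - |P₋ψʲ|² ⟨P₋ψⁱ, P₋ψᵐ⟩)`, which the Majorana-type condition kills.
-/

lemma g1_mul_g2 : g1 * g2 = !![I, 0; 0, -I] := by
  ext i j
  fin_cases i <;> fin_cases j <;> simp [g1, g2, Matrix.mul_apply]

lemma vol_eq : vol = !![-1, 0; 0, 1] := by
  ext i j
  fin_cases i <;> fin_cases j <;> simp [vol, g1_mul_g2]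

lemma g1_mulVec (ψ : Fin 2 → ℂ) : g1 *ᵥ ψ = ![ψ 1, -ψ 0] := by
  ext i
  fin_cases i <;> simp [g1, Matrix.mulVec, dotProduct, Fin.sum_univ_two]

lemma g2_mulVec (ψ : Fin 2 → ℂ) : g2 *ᵥ ψ = ![I * ψ 1, I * ψ 0] := by
  ext i
  fin_cases i <;> simp [g2, Matrix.mulVec, dotProduct, Fin.sum_univ_two]

lemma g1_mul_g2_mulVec (ψ : Fin 2 → ℂ) : (g1 * g2) *ᵥ ψ = ![I * ψ 0, -I * ψ 1] := by
  ext i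
  fin_cases i <;> simp [g1_mul_g2, Matrix.mulVec, dotProduct, Fin.sum_univ_two]

lemma Pm_mulVec (ψ : Fin 2 → ℂ) : Pm *ᵥ ψ = ![ψ 0, 0] := by
  ext i
  fin_cases i <;> norm_num [Pm, vol_eq, Matrix.mulVec, dotProduct, Fin.sum_univ_two]

lemma Pp_mulVec (ψ : Fin 2 → ℂ) : Pp *ᵥ ψ = ![0, ψ 1] := by
  ext i
  fin_cases i <;> norm_num [Pp, vol_eq, Matrix.mulVec, dotProduct, Fin.sum_univ_two]

lemma inn_Pm_mulVec (u v : Fin 2 → ℂ) : inn (Pm *ᵥ u) (Pm *ᵥ v) = star (u 0) * v 0 := by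
  rw [Pm_mulVec, Pm_mulVec]
  simp [inn]

lemma inn_Pp_mulVec (u v : Fin 2 → ℂ) : inn (Pp *ᵥ u) (Pp *ᵥ v) = star (u 1) * v 1 := by
  rw [Pp_mulVec, Pp_mulVec]
  simp [inn]

theorem fierz_identity (ψi ψj ψm : Fin 2 → ℂ) :
    inn ψi (g1 *ᵥ ψj) * inn ψj (g2 *ᵥ ψm) - inn ψi (g2 *ᵥ ψj) * inn ψj (g1 *ᵥ ψm)
      - 2 * inn ψi ((g1 * g2) *ᵥ ψm) * inn ψj ψj
    = 2 * I * (inn (Pp *ᵥ ψj) (Pp *ᵥ ψj) * inn (Pp *ᵥ ψi) (Pp *ᵥ ψm)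
      - inn (Pm *ᵥ ψj) (Pm *ᵥ ψj) * inn (Pm *ᵥ ψi) (Pm *ᵥ ψm)) := by
  rw [inn_Pp_mulVec, inn_Pp_mulVec, inn_Pm_mulVec, inn_Pm_mulVec]
  simp only [g1_mulVec, g2_mulVec, g1_mul_g2_mulVec, inn, cons_val_zero, cons_val_one]
  ring

theorem fierz_identity_majorana (ψi ψj ψm : Fin 2 → ℂ)
    (h : inn (Pm.mulVec ψj) (Pm.mulVec ψj) * inn (Pm.mulVec ψi) (Pm.mulVec ψm)
       = inn (Pp.mulVec ψj) (Pp.mulVec ψj) * inn (Pp.mulVec ψi) (Pp.mulVec ψm)) :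
    inn ψi (g1.mulVec ψj) * inn ψj (g2.mulVec ψm)
      - inn ψi (g2.mulVec ψj) * inn ψj (g1.mulVec ψm)
    = 2 * inn ψi ((g1 * g2).mulVec ψm) * inn ψj ψj := by
  rw [← sub_eq_zero, fierz_identity, h, sub_self, mul_zero]
end
end

section
/- Zero-curvature identity for harmonic maps to spheres: let φ : Ω → ℝ^{n+1} be smooth with |φ| = 1 and Δφ = -|dφ|²φ, and define the skew-symmetric-matrix-valued 1-form J_α^{im} = φⁱ_α φᵐ - φⁱ φᵐ_α. Then ∂_x J_y - ∂_y J_x - 2[J_x, J_y] = 0, where [A,B] = AB - BA is the matrix commutator. -/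
open Matrix Complex

noncomputable section

/-- Directional (partial) derivative of a real-valued function on ℝ². -/
def pd (v : ℝ × ℝ) (f : ℝ × ℝ → ℝ) (p : ℝ × ℝ) : ℝ := fderiv ℝ f p v

/-- Euclidean Laplacian on ℝ². -/
def lap (f : ℝ × ℝ → ℝ) (p : ℝ × ℝ) : ℝ :=
  pd (1, 0) (pd (1, 0) f) p + pd (0, 1) (pd (0, 1) f) p


lemma pd_sub {f g : ℝ × ℝ → ℝ} {p : ℝ × ℝ} (hf : DifferentiableAt ℝ f p)
    (hg : DifferentiableAt ℝ g p) (v : ℝ × ℝ) :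
    pd v (fun q => f q - g q) p = pd v f p - pd v g p := by
  simp [pd, fderiv_fun_sub hf hg]

lemma pd_mul {f g : ℝ × ℝ → ℝ} {p : ℝ × ℝ} (hf : DifferentiableAt ℝ f p)
    (hg : DifferentiableAt ℝ g p) (v : ℝ × ℝ) :
    pd v (fun q => f q * g q) p = pd v f p * g p + f p * pd v g p := by
  simp [pd, fderiv_fun_mul hf hg]; ring

lemma contDiffAt_pd {f : ℝ × ℝ → ℝ} {p : ℝ × ℝ} (hf : ContDiffAt ℝ (⊤ : ℕ∞) f p) (v : ℝ × ℝ) :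
    ContDiffAt ℝ (⊤ : ℕ∞) (pd v f) p := by
  have h1 : ContDiffAt ℝ (⊤ : ℕ∞) (fderiv ℝ f) p := hf.fderiv_right (by simp)
  have h2 : ContDiff ℝ (⊤ : ℕ∞) (ContinuousLinearMap.apply ℝ ℝ v : ((ℝ × ℝ) →L[ℝ] ℝ) →L[ℝ] ℝ) :=
    (ContinuousLinearMap.apply ℝ ℝ v).contDiff
  exact h2.comp_contDiffAt p h1

lemma pd_comm {f : ℝ × ℝ → ℝ} {p : ℝ × ℝ} (hf : ContDiffAt ℝ (⊤ : ℕ∞) f p) (v w : ℝ × ℝ) :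
    pd v (pd w f) p = pd w (pd v f) p := by
  have h1 : ContDiffAt ℝ (⊤ : ℕ∞) (fderiv ℝ f) p := hf.fderiv_right (by simp)
  have hd : DifferentiableAt ℝ (fderiv ℝ f) p := h1.differentiableAt (by simp)
  have hsymm : IsSymmSndFDerivAt ℝ f p := hf.isSymmSndFDerivAt (by simp; show ((2:ℕ∞) : WithTop ℕ∞) ≤ _; exact WithTop.coe_le_coe.mpr le_top)
  have key : ∀ u u' : ℝ × ℝ, pd u (pd u' f) p = fderiv ℝ (fderiv ℝ f) p u u' := by
    intro u u'
    show (fderiv ℝ (fun q => (fderiv ℝ f q) u') p) u = _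
    rw [fderiv_clm_apply hd (differentiableAt_const u')]
    simp
  rw [key, key, hsymm]

lemma pd_eventually_const {f : ℝ × ℝ → ℝ} {p : ℝ × ℝ} {c : ℝ}
    (h : ∀ᶠ q in nhds p, f q = c) (v : ℝ × ℝ) : pd v f p = 0 := by
  have : fderiv ℝ f p = fderiv ℝ (fun _ => c) p :=
    Filter.EventuallyEq.fderiv_eq h
  simp [pd, this]

lemma pd_sum {ι : Type*} (s : Finset ι) {f : ι → ℝ × ℝ → ℝ} {p : ℝ × ℝ}
    (h : ∀ i ∈ s, DifferentiableAt ℝ (f i) p) (v : ℝ × ℝ) :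
    pd v (fun q => ∑ i ∈ s, f i q) p = ∑ i ∈ s, pd v (f i) p := by
  simp [pd, fderiv_fun_sum h]

theorem zero_curvature_harmonic_sphere (n : ℕ) (Ω : Set (ℝ × ℝ)) (hΩ : IsOpen Ω)
    (φ : ℝ × ℝ → Fin (n + 1) → ℝ)
    (hsm : ∀ i, ContDiffOn ℝ (⊤ : ℕ∞) (fun p => φ p i) Ω)
    (hsph : ∀ p ∈ Ω, ∑ i, (φ p i) ^ 2 = 1)
    (hharm : ∀ p ∈ Ω, ∀ i, lap (fun q => φ q i) p
      = -((∑ j, ((pd (1, 0) (fun q => φ q j) p) ^ 2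
          + (pd (0, 1) (fun q => φ q j) p) ^ 2)) * φ p i))
    (Jx Jy : ℝ × ℝ → Matrix (Fin (n + 1)) (Fin (n + 1)) ℝ)
    (hJx : ∀ p i m, Jx p i m
      = pd (1, 0) (fun q => φ q i) p * φ p m - φ p i * pd (1, 0) (fun q => φ q m) p)
    (hJy : ∀ p i m, Jy p i m
      = pd (0, 1) (fun q => φ q i) p * φ p m - φ p i * pd (0, 1) (fun q => φ q m) p) :
    ∀ p ∈ Ω, ∀ i m,
      pd (1, 0) (fun q => Jy q i m) p - pd (0, 1) (fun q => Jx q i m) p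
        - 2 * (Jx p * Jy p - Jy p * Jx p) i m = 0 := by
  intro p hp i m
  have hpn : Ω ∈ nhds p := hΩ.mem_nhds hp
  set F : Fin (n + 1) → ℝ × ℝ → ℝ := fun k q => φ q k with hF
  have hC : ∀ k, ContDiffAt ℝ (⊤ : ℕ∞) (F k) p := fun k => (hsm k).contDiffAt hpn
  have dF : ∀ k, DifferentiableAt ℝ (F k) p := fun k => (hC k).differentiableAt (by simp)
  have dP : ∀ k v, DifferentiableAt ℝ (pd v (F k)) p :=
    fun k v => (contDiffAt_pd (hC k) v).differentiableAt (by simp)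
  -- derivative of Jy entry
  have eJy : (fun q => Jy q i m)
      = fun q => pd (0,1) (F i) q * F m q - F i q * pd (0,1) (F m) q :=
    funext fun q => hJy q i m
  have eJx : (fun q => Jx q i m)
      = fun q => pd (1,0) (F i) q * F m q - F i q * pd (1,0) (F m) q :=
    funext fun q => hJx q i m
  have hdJy : pd (1,0) (fun q => Jy q i m) p
      = (pd (1,0) (pd (0,1) (F i)) p * F m p + pd (0,1) (F i) p * pd (1,0) (F m) p)
        - (pd (1,0) (F i) p * pd (0,1) (F m) p + F i p * pd (1,0) (pd (0,1) (F m)) p) := by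
    rw [eJy, pd_sub ((dP i (0,1)).fun_mul (dF m)) ((dF i).fun_mul (dP m (0,1))),
      pd_mul (dP i (0,1)) (dF m), pd_mul (dF i) (dP m (0,1))]
  have hdJx : pd (0,1) (fun q => Jx q i m) p
      = (pd (0,1) (pd (1,0) (F i)) p * F m p + pd (1,0) (F i) p * pd (0,1) (F m) p)
        - (pd (0,1) (F i) p * pd (1,0) (F m) p + F i p * pd (0,1) (pd (1,0) (F m)) p) := by
    rw [eJx, pd_sub ((dP i (1,0)).fun_mul (dF m)) ((dF i).fun_mul (dP m (1,0))),
      pd_mul (dP i (1,0)) (dF m), pd_mul (dF i) (dP m (1,0))]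
  -- constraints
  have haa : ∑ k, F k p * F k p = 1 := by
    have := hsph p hp
    simpa [pow_two] using this
  have hconstr : ∀ v : ℝ × ℝ, ∑ k, F k p * pd v (F k) p = 0 := by
    intro v
    have h0 : pd v (fun q => ∑ k, F k q * F k q) p = 0 := by
      refine pd_eventually_const (c := 1) ?_ v
      filter_upwards [hpn] with q hq
      simpa [pow_two] using hsph q hq
    rw [pd_sum Finset.univ (fun k _ => (dF k).fun_mul (dF k)) v] at h0
    have : ∀ k ∈ Finset.univ, pd v (fun q => F k q * F k q) p
        = 2 * (F k p * pd v (F k) p) := by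
      intro k _
      rw [pd_mul (dF k) (dF k)]; ring
    rw [Finset.sum_congr rfl this, ← Finset.mul_sum] at h0
    linarith
  have hax := hconstr (1,0)
  have hay := hconstr (0,1)
  -- commutator
  have hcomm : (Jx p * Jy p - Jy p * Jx p) i m
      = pd (0,1) (F i) p * pd (1,0) (F m) p - pd (1,0) (F i) p * pd (0,1) (F m) p := by
    simp only [Matrix.sub_apply, Matrix.mul_apply, hJx, hJy, ← Finset.sum_sub_distrib]
    have : ∀ k ∈ Finset.univ,
        (pd (1,0) (F i) p * F k p - F i p * pd (1,0) (F k) p)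
          * (pd (0,1) (F k) p * F m p - F k p * pd (0,1) (F m) p)
        - (pd (0,1) (F i) p * F k p - F i p * pd (0,1) (F k) p)
          * (pd (1,0) (F k) p * F m p - F k p * pd (1,0) (F m) p)
        = (pd (1,0) (F i) p * F m p) * (F k p * pd (0,1) (F k) p)
          + (-(pd (1,0) (F i) p * pd (0,1) (F m) p)) * (F k p * F k p)
          + (-(F i p * F m p)) * (pd (1,0) (F k) p * pd (0,1) (F k) p)
          + (F i p * pd (0,1) (F m) p) * (F k p * pd (1,0) (F k) p)
          + (-(pd (0,1) (F i) p * F m p)) * (F k p * pd (1,0) (F k) p)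
          + (pd (0,1) (F i) p * pd (1,0) (F m) p) * (F k p * F k p)
          + (F i p * F m p) * (pd (1,0) (F k) p * pd (0,1) (F k) p)
          + (-(F i p * pd (1,0) (F m) p)) * (F k p * pd (0,1) (F k) p) := by
      intro k _; ring
    rw [Finset.sum_congr rfl this]
    simp only [Finset.sum_add_distrib, ← Finset.mul_sum]
    rw [haa, hax, hay]
    ring
  rw [hdJy, hdJx, hcomm, pd_comm (hC i) (1,0) (0,1), pd_comm (hC m) (1,0) (0,1)]
  ring
end
end
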